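/- Let s ∈ (0,1), γ > 1, ξ > 0 and φ(x) = (|x|+ξ)^{−γ} on ℝ. There exists a constant C = C(γ, s, ξ) > 0 such that for all |x| ≥ |x₀| > 1, the one-dimensional fractional Laplacian satisfies |(−Δ)^s φ(x)| ≤ C |x|^{−(1+2s)}. -/

import Mathlib

/-!
Substituting `y = x + t` and pairing `t` with `-t`, the truncated integral becomes
`∫_{t > ε} (2φ(x) - φ(x+t) - φ(x-t)) t^(-1-2s) dt`, which is even in `x`; take `x > 0`
and split at `t = x/2`. For `t < x/2` the mean value theorem, applied to `φ` and `φ'`, bounds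
the second difference by `2γ(γ+1) ξ^(1-γ) (x/2)^(-3) t²`, which integrates against `t^(-1-2s)` over `(0, x/2)` to
`O(x^(-1-2s))`. For `t ≥ x/2`, the term `2φ(x) t^(-1-2s)` integrates to `O(φ(x) x^(-2s))`
with `φ(x) ≤ ξ^(1-γ)/x`, and `(φ(x+t) + φ(x-t)) t^(-1-2s) ≤ (x/2)^(-1-2s) (φ(x+t) + φ(x-t))`
integrates to at most `2 ‖φ‖₁ (x/2)^(-1-2s)`. Trading powers of `u + ξ` for powers of `ξ`
keeps every constant uniform in `x > 0`, and a bound uniform in `ε` passes to the limit.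
-/

open MeasureTheory Set Filter Topology Metric

theorem integrable_comp_abs_of_integrableOn_Ioi {g : ℝ → ℝ} (hg : IntegrableOn g (Ioi 0)) :
    Integrable fun y => g |y| := by
  have hpos : IntegrableOn (fun y => g |y|) (Ioi 0) :=
    hg.congr_fun (fun y hy => by rw [abs_of_pos hy]) measurableSet_Ioi
  have hneg : IntegrableOn (fun y => g |y|) (Iio 0) := by
    have := ((Measure.measurePreserving_neg volume).integrableOn_comp_preimage
      (Homeomorph.neg ℝ).measurableEmbedding).mpr hpos
    simpa [Function.comp_def] using this
  rw [← integrableOn_univ, ← Iio_union_Ici]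
  exact hneg.union (Iff.mpr integrableOn_Ici_iff_integrableOn_Ioi hpos)

theorem integrable_abs_add_rpow_neg {c q : ℝ} (hc : 0 < c) (hq : 1 < q) :
    Integrable fun y : ℝ => (|y| + c) ^ (-q) := by
  refine integrable_comp_abs_of_integrableOn_Ioi (g := fun t => (t + c) ^ (-q)) ?_
  have := ((measurePreserving_add_right volume c).integrableOn_comp_preimage
    (measurableEmbedding_addRight c)).mpr (integrableOn_Ioi_rpow_of_lt (neg_lt_neg hq) hc)
  simpa [Function.comp_def] using this

theorem integrableOn_abs_lt_of_abs_le_rpow_neg {H : ℝ → ℝ} {C p ε : ℝ} (hH : Measurable H)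
    (hp : 1 < p) (hε : 0 < ε) (hC : 0 ≤ C) (hb : ∀ z, |H z| ≤ C * |z| ^ (-p)) :
    IntegrableOn H {z | ε < |z|} := by
  refine Integrable.mono'
    ((integrable_abs_add_rpow_neg hε hp).const_mul (C * 2 ^ p)).integrableOn
    hH.aestronglyMeasurable (ae_restrict_of_forall_mem
      (measurableSet_lt measurable_const measurable_abs) fun z (hεz : ε < |z|) => ?_)
  have hz : 0 < |z| := hε.trans hεz
  calc ‖H z‖ ≤ C * |z| ^ (-p) := hb z
    _ = C * 2 ^ p * (2 * |z|) ^ (-p) := by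
      rw [Real.mul_rpow zero_le_two hz.le, Real.rpow_neg zero_le_two, ← mul_assoc, mul_assoc C,
        mul_inv_cancel₀ (by positivity), mul_one]
    _ ≤ C * 2 ^ p * (|z| + ε) ^ (-p) := by
      refine mul_le_mul_of_nonneg_left ?_ (by positivity)
      exact Real.rpow_le_rpow_of_nonpos (by positivity) (by linarith : |z| + ε ≤ 2 * |z|)
        (by linarith : -p ≤ 0)

theorem rpow_neg_le_rpow_sub_mul_rpow_neg {a b c p q : ℝ} (hb : 0 < b) (hc : 0 < c)
    (hba : b ≤ a) (hca : c ≤ a) (hq : 0 ≤ q) (hqp : q ≤ p) :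
    a ^ (-p) ≤ b ^ (q - p) * c ^ (-q) := by
  have ha : 0 < a := hb.trans_le hba
  calc a ^ (-p) = a ^ (q - p) * a ^ (-q) := by rw [← Real.rpow_add ha]; ring_nf
    _ ≤ b ^ (q - p) * c ^ (-q) :=
      mul_le_mul (Real.rpow_le_rpow_of_nonpos hb hba (by linarith))
        (Real.rpow_le_rpow_of_nonpos hc hca (by linarith)) (Real.rpow_nonneg ha.le _)
        (Real.rpow_nonneg hb.le _)

theorem abs_add_add_sub_two_mul_le {f f' f'' : ℝ → ℝ} {x z M : ℝ}
    (hf : ∀ t ∈ closedBall x |z|, HasDerivAt f (f' t) t)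
    (hf' : ∀ t ∈ closedBall x |z|, HasDerivAt f' (f'' t) t)
    (hM : ∀ t ∈ closedBall x |z|, |f'' t| ≤ M) :
    |f (x + z) + f (x - z) - 2 * f x| ≤ 2 * M * z ^ 2 := by
  have hM0 : 0 ≤ M := (abs_nonneg _).trans (hM x (mem_closedBall_self (abs_nonneg z)))
  have hmem : ∀ t ∈ closedBall (0 : ℝ) |z|,
      x + t ∈ closedBall x |z| ∧ x - t ∈ closedBall x |z| :=
    fun t ht => by simp_all [Real.dist_eq]
  have hg : ∀ t ∈ closedBall (0 : ℝ) |z|,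
      HasDerivAt (fun u => f (x + u) + f (x - u)) (f' (x + t) - f' (x - t)) t := by
    intro t ht
    have h₁ := (hf _ (hmem t ht).1).comp t ((hasDerivAt_id t).const_add x)
    have h₂ := (hf _ (hmem t ht).2).comp t ((hasDerivAt_id t).const_sub x)
    have := h₁.add h₂
    rwa [mul_one, mul_neg_one, ← sub_eq_add_neg] at this
  have hg' : ∀ t ∈ closedBall (0 : ℝ) |z|, ‖f' (x + t) - f' (x - t)‖ ≤ 2 * M * |z| := by
    intro t ht
    have := (convex_closedBall x |z|).norm_image_sub_le_of_norm_hasDerivWithin_le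
      (fun u hu => (hf' u hu).hasDerivWithinAt) hM (hmem t ht).2 (hmem t ht).1
    have ht' : |t| ≤ |z| := by simpa using ht
    calc ‖f' (x + t) - f' (x - t)‖ ≤ M * |x + t - (x - t)| := this
      _ = 2 * M * |t| := by rw [show x + t - (x - t) = 2 * t by ring, abs_mul]; norm_num; ring
      _ ≤ 2 * M * |z| := by gcongr
  have := (convex_closedBall (0 : ℝ) |z|).norm_image_sub_le_of_norm_hasDerivWithin_le
    (fun t ht => (hg t ht).hasDerivWithinAt) hg' (mem_closedBall_self (abs_nonneg z))
    (y := z) (by simp)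
  simp only [add_zero, sub_zero, Real.norm_eq_abs] at this
  rw [← two_mul] at this
  convert this using 1
  rw [← sq_abs z, sq]; ring

noncomputable def truncatedFracLaplacian (s ε : ℝ) (f : ℝ → ℝ) (x : ℝ) : ℝ :=
  ∫ y in {y : ℝ | ε < |x - y|}, (f x - f y) / |x - y| ^ (1 + 2 * s)

noncomputable def secondDiffQuotient (f : ℝ → ℝ) (p x t : ℝ) : ℝ :=
  (2 * f x - f (x + t) - f (x - t)) / t ^ p

theorem abs_sub_div_rpow_le {f : ℝ → ℝ} {M p : ℝ} (hM : ∀ y, |f y| ≤ M) (a b c : ℝ) :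
    |(f a - f b) / |c| ^ p| ≤ 2 * M * |c| ^ (-p) := by
  rw [abs_div, abs_of_nonneg (Real.rpow_nonneg (abs_nonneg c) p), Real.rpow_neg (abs_nonneg c),
    ← div_eq_mul_inv]
  gcongr
  linarith [abs_sub (f a) (f b), hM a, hM b]

theorem truncatedFracLaplacian_eq_integral_Ioi {f : ℝ → ℝ} {M s ε : ℝ} (hf : Measurable f)
    (hM : ∀ y, |f y| ≤ M) (hs : 0 < s) (hε : 0 < ε) (x : ℝ) :
    truncatedFracLaplacian s ε f x =
      ∫ t in Ioi ε, secondDiffQuotient f (1 + 2 * s) x t := by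
  set p := 1 + 2 * s
  have hp : 1 < p := by linarith
  have hM0 : 0 ≤ 2 * M := by linarith [abs_nonneg (f 0), hM 0]
  set G : ℝ → ℝ := fun z => (f x - f (x + z)) / |z| ^ p
  have hGint : IntegrableOn G {z | ε < |z|} :=
    integrableOn_abs_lt_of_abs_le_rpow_neg (by fun_prop) hp hε hM0
      fun z => abs_sub_div_rpow_le hM _ _ _
  have hGnegint : IntegrableOn (fun z => G (-z)) {z | ε < |z|} :=
    integrableOn_abs_lt_of_abs_le_rpow_neg (by fun_prop) hp hε hM0
      fun z => by simpa only [G, abs_neg] using abs_sub_div_rpow_le hM x (x + -z) z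
  have hsplit : {z : ℝ | ε < |z|} = Iio (-ε) ∪ Ioi ε := by
    ext z
    rw [mem_union, mem_Iio, mem_Ioi, mem_ofPred_eq, lt_abs, lt_neg, or_comm]
  calc truncatedFracLaplacian s ε f x = ∫ z in {z : ℝ | ε < |z|}, G z := by
        rw [truncatedFracLaplacian,
          ← (measurePreserving_add_left volume x).setIntegral_preimage_emb
            (measurableEmbedding_addLeft x)]
        simp only [preimage_ofPred_eq, sub_add_cancel_left, abs_neg]
        rfl
    _ = (∫ t in Ioi ε, G (-t)) + ∫ t in Ioi ε, G t := by
        rw [hsplit] at hGint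
        rw [hsplit, setIntegral_union
          ((Iic_disjoint_Ioi (by linarith : -ε ≤ ε)).mono_left Iio_subset_Iic_self)
          measurableSet_Ioi (hGint.mono_set subset_union_left) (hGint.mono_set subset_union_right),
          integral_comp_neg_Ioi, integral_Iic_eq_integral_Iio]
    _ = ∫ t in Ioi ε, secondDiffQuotient f p x t := by
        rw [hsplit] at hGint hGnegint
        rw [← integral_add (hGnegint.mono_set subset_union_right)
          (hGint.mono_set subset_union_right)]
        refine setIntegral_congr_fun measurableSet_Ioi fun t ht => ?_
        have ht : 0 < t := hε.trans ht
        simp only [G, secondDiffQuotient, abs_neg, abs_of_pos ht, ← sub_eq_add_neg]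
        ring

theorem integrableOn_Ioi_secondDiffQuotient {f : ℝ → ℝ} {M p ε : ℝ} (hf : Measurable f)
    (hM : ∀ y, |f y| ≤ M) (hp : 1 < p) (hε : 0 < ε) (x : ℝ) :
    IntegrableOn (secondDiffQuotient f p x) (Ioi ε) := by
  refine Integrable.mono' ((integrableOn_Ioi_rpow_of_lt (neg_lt_neg hp) hε).const_mul (4 * M))
    (by unfold secondDiffQuotient; fun_prop : Measurable _).aestronglyMeasurable
    (ae_restrict_of_forall_mem measurableSet_Ioi fun t ht => ?_)
  have ht0 : 0 < t := hε.trans ht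
  rw [Real.norm_eq_abs, secondDiffQuotient, abs_div, abs_of_pos (Real.rpow_pos_of_pos ht0 _),
    Real.rpow_neg ht0.le, ← div_eq_mul_inv]
  gcongr
  have := abs_le.mp (hM x); have := abs_le.mp (hM (x + t)); have := abs_le.mp (hM (x - t))
  exact abs_le.mpr ⟨by linarith, by linarith⟩

theorem secondDiffQuotient_abs {f : ℝ → ℝ} (hf : Function.Even f) (p x t : ℝ) :
    secondDiffQuotient f p |x| t = secondDiffQuotient f p x t := by
  rcases abs_choice x with h | h
  · rw [h]
  · rw [h, secondDiffQuotient, secondDiffQuotient, show -x + t = -(x - t) by ring,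
      show -x - t = -(x + t) by ring, hf, hf, hf]
    ring

theorem abs_secondDiffQuotient_le {f : ℝ → ℝ} (hf : ∀ y, 0 ≤ f y) {p r x t : ℝ} (hr : 0 < r)
    (hrt : r ≤ t) (hp : 0 ≤ p) :
    |secondDiffQuotient f p x t| ≤ 2 * f x * t ^ (-p) + r ^ (-p) * (f (x + t) + f (x - t)) := by
  have ht : 0 < t := hr.trans_le hrt
  have hnum : |2 * f x - f (x + t) - f (x - t)| ≤ 2 * f x + (f (x + t) + f (x - t)) := by
    rw [abs_le]; constructor <;> linarith [hf x, hf (x + t), hf (x - t)]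
  calc |secondDiffQuotient f p x t| = |2 * f x - f (x + t) - f (x - t)| * t ^ (-p) := by
        rw [secondDiffQuotient, abs_div, abs_of_pos (Real.rpow_pos_of_pos ht _),
          Real.rpow_neg ht.le, div_eq_mul_inv]
    _ ≤ (2 * f x + (f (x + t) + f (x - t))) * t ^ (-p) := by gcongr
    _ ≤ 2 * f x * t ^ (-p) + r ^ (-p) * (f (x + t) + f (x - t)) := by
        rw [add_mul, mul_comm (f (x + t) + f (x - t))]
        exact add_le_add_right (mul_le_mul_of_nonneg_right
          (Real.rpow_le_rpow_of_nonpos hr hrt (by linarith)) (add_nonneg (hf _) (hf _))) _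

noncomputable def algebraicDecay (γ ξ y : ℝ) : ℝ := (|y| + ξ) ^ (-γ)

section algebraicDecay

variable {γ ξ : ℝ}

theorem algebraicDecay_neg (y : ℝ) : algebraicDecay γ ξ (-y) = algebraicDecay γ ξ y := by
  simp only [algebraicDecay, abs_neg]

theorem algebraicDecay_nonneg (hξ : 0 ≤ ξ) (y : ℝ) : 0 ≤ algebraicDecay γ ξ y := by
  unfold algebraicDecay; positivity

theorem abs_algebraicDecay_le (hγ : 0 ≤ γ) (hξ : 0 < ξ) (y : ℝ) :
    |algebraicDecay γ ξ y| ≤ ξ ^ (-γ) := by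
  rw [abs_of_nonneg (algebraicDecay_nonneg hξ.le y)]
  exact Real.rpow_le_rpow_of_nonpos hξ (le_add_of_nonneg_left (abs_nonneg y)) (by linarith)

theorem continuous_algebraicDecay (hξ : 0 < ξ) : Continuous (algebraicDecay γ ξ) :=
  (continuous_abs.add continuous_const).rpow_const fun y =>
    Or.inl (add_pos_of_nonneg_of_pos (abs_nonneg y) hξ).ne'

theorem integrable_algebraicDecay (hγ : 1 < γ) (hξ : 0 < ξ) :
    Integrable (algebraicDecay γ ξ) :=
  integrable_abs_add_rpow_neg hξ hγ

theorem algebraicDecay_le_mul_rpow_neg_one (hγ : 1 ≤ γ) (hξ : 0 < ξ) {x r : ℝ} (hr : 0 < r)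
    (hrx : r ≤ x) : algebraicDecay γ ξ x ≤ ξ ^ (1 - γ) * r ^ (-1 : ℝ) := by
  rw [algebraicDecay, abs_of_pos (hr.trans_le hrx)]
  exact rpow_neg_le_rpow_sub_mul_rpow_neg hξ hr (by linarith) (by linarith) zero_le_one hγ

theorem abs_second_diff_algebraicDecay_le (hγ : 1 ≤ γ) (hξ : 0 < ξ) {x t : ℝ} (hx : 0 < x)
    (ht : |t| ≤ x / 2) :
    |2 * algebraicDecay γ ξ x - algebraicDecay γ ξ (x + t) - algebraicDecay γ ξ (x - t)| ≤
      2 * (γ * (γ + 1) * ξ ^ (1 - γ) * (x / 2) ^ (-3 : ℝ)) * t ^ 2 := by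
  have hball : ∀ u ∈ closedBall x |t|, x / 2 ≤ u := fun u hu => by
    rw [mem_closedBall, Real.dist_eq, abs_le] at hu; linarith
  have hpos : ∀ u ∈ closedBall x |t|, 0 < u + ξ := fun u hu => by linarith [hball u hu]
  have hψ : ∀ u ∈ closedBall x |t|, HasDerivAt (fun v => (v + ξ) ^ (-γ))
      (-γ * (u + ξ) ^ (-γ - 1)) u := fun u hu => by
    simpa using ((hasDerivAt_id u).add_const ξ).rpow_const (p := -γ) (Or.inl (hpos u hu).ne')
  have hψ' : ∀ u ∈ closedBall x |t|, HasDerivAt (fun v => -γ * (v + ξ) ^ (-γ - 1))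
      (γ * (γ + 1) * (u + ξ) ^ (-(γ + 2))) u := fun u hu => by
    refine ((((hasDerivAt_id u).add_const ξ).rpow_const (p := -γ - 1)
      (Or.inl (hpos u hu).ne')).const_mul (-γ)).congr_deriv ?_
    rw [show -γ - 1 - 1 = -(γ + 2) by ring, id]; ring
  have hψ'' : ∀ u ∈ closedBall x |t|,
      |γ * (γ + 1) * (u + ξ) ^ (-(γ + 2))| ≤
        γ * (γ + 1) * ξ ^ (1 - γ) * (x / 2) ^ (-3 : ℝ) := by
    intro u hu
    have hγ0 : 0 ≤ γ * (γ + 1) := mul_nonneg (by linarith) (by linarith)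
    rw [abs_of_nonneg (mul_nonneg hγ0 (Real.rpow_nonneg (hpos u hu).le _)),
      mul_assoc (γ * (γ + 1)), show 1 - γ = 3 - (γ + 2) by ring]
    exact mul_le_mul_of_nonneg_left (rpow_neg_le_rpow_sub_mul_rpow_neg hξ (half_pos hx)
      (by linarith [hball u hu]) (by linarith [hball u hu]) (by norm_num) (by linarith)) hγ0
  have hxt : ∀ u ∈ closedBall x |t|, algebraicDecay γ ξ u = (u + ξ) ^ (-γ) := fun u hu => by
    rw [algebraicDecay, abs_of_pos (by linarith [hball u hu])]
  rw [hxt x (mem_closedBall_self (abs_nonneg t)), hxt (x + t) (by simp),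
    hxt (x - t) (by simp), ← abs_neg]
  convert abs_add_add_sub_two_mul_le hψ hψ' hψ'' using 2
  ring

variable {s : ℝ}

theorem abs_setIntegral_Ioo_secondDiffQuotient_le (hs : s < 1) (hγ : 1 ≤ γ) (hξ : 0 < ξ)
    {x ε : ℝ} (hx : 0 < x) (hε : 0 < ε) (hεx : ε ≤ x / 2) :
    |∫ t in Ioo ε (x / 2), secondDiffQuotient (algebraicDecay γ ξ) (1 + 2 * s) x t| ≤
      γ * (γ + 1) * ξ ^ (1 - γ) / (1 - s) * (x / 2) ^ (-(1 + 2 * s)) := by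
  set r := x / 2
  set p := 1 + 2 * s
  have hr : 0 < r := by positivity
  set A := 2 * (γ * (γ + 1) * ξ ^ (1 - γ) * r ^ (-3 : ℝ)) with hA
  have hA0 : 0 ≤ A := by
    have : 0 ≤ γ * (γ + 1) := mul_nonneg (by linarith) (by linarith)
    positivity
  have hbound : ∀ t ∈ Ioo ε r,
      ‖secondDiffQuotient (algebraicDecay γ ξ) p x t‖ ≤ A * t ^ (2 - p) := by
    intro t ht
    have ht0 : 0 < t := hε.trans ht.1
    rw [Real.norm_eq_abs, secondDiffQuotient, abs_div, abs_of_pos (Real.rpow_pos_of_pos ht0 _),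
      div_le_iff₀ (Real.rpow_pos_of_pos ht0 _), mul_assoc, ← Real.rpow_add ht0,
      show 2 - p + p = (2 : ℝ) by ring, Real.rpow_two]
    exact abs_second_diff_algebraicDecay_le hγ hξ hx (by rw [abs_of_pos ht0]; exact ht.2.le)
  have hint : IntegrableOn (fun t : ℝ => A * t ^ (2 - p)) (Ioo ε r) :=
    ((intervalIntegrable_iff_integrableOn_Ioo_of_le hεx).mp
      (intervalIntegral.intervalIntegrable_rpow' (by linarith))).const_mul A
  calc |∫ t in Ioo ε r, secondDiffQuotient (algebraicDecay γ ξ) p x t|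
      ≤ ∫ t in Ioo ε r, A * t ^ (2 - p) :=
        norm_integral_le_of_norm_le hint (ae_restrict_of_forall_mem measurableSet_Ioo hbound)
    _ = A * ((r ^ (3 - p) - ε ^ (3 - p)) / (3 - p)) := by
        rw [integral_const_mul, ← integral_Ioc_eq_integral_Ioo,
          ← intervalIntegral.integral_of_le hεx, integral_rpow (Or.inl (by linarith))]
        ring_nf
    _ ≤ A * (r ^ (3 - p) / (3 - p)) :=
        mul_le_mul_of_nonneg_left (div_le_div_of_nonneg_right
          (sub_le_self _ (Real.rpow_nonneg hε.le _)) (by linarith)) hA0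
    _ = γ * (γ + 1) * ξ ^ (1 - γ) / (1 - s) * r ^ (-p) := by
        have : r ^ (-3 : ℝ) * r ^ (3 - p) = r ^ (-p) := by rw [← Real.rpow_add hr]; ring_nf
        rw [← this, hA, show 3 - p = 2 * (1 - s) by ring]
        field_simp

theorem abs_setIntegral_Ici_secondDiffQuotient_le (hs : 0 < s) (hγ : 1 < γ) (hξ : 0 < ξ)
    {x : ℝ} (hx : 0 < x) :
    |∫ t in Ici (x / 2), secondDiffQuotient (algebraicDecay γ ξ) (1 + 2 * s) x t| ≤
      (ξ ^ (1 - γ) / s + 2 * ∫ y, algebraicDecay γ ξ y) * (x / 2) ^ (-(1 + 2 * s)) := by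
  set r := x / 2
  set p := 1 + 2 * s
  set φ := algebraicDecay γ ξ
  have hr : 0 < r := by positivity
  have hp : 1 < p := by linarith
  have hφ := integrable_algebraicDecay hγ hξ
  set g : ℝ → ℝ := fun t => 2 * φ x * t ^ (-p) + r ^ (-p) * (φ (x + t) + φ (x - t))
  have hbound : ∀ t ∈ Ici r, ‖secondDiffQuotient φ p x t‖ ≤ g t := fun t ht =>
    abs_secondDiffQuotient_le (algebraicDecay_nonneg hξ.le) hr ht (by linarith)
  have hpow : IntegrableOn (fun t : ℝ => t ^ (-p)) (Ici r) :=
    Iff.mpr integrableOn_Ici_iff_integrableOn_Ioi (integrableOn_Ioi_rpow_of_lt (by linarith) hr)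
  have hshift : Integrable fun t => φ (x + t) + φ (x - t) :=
    (hφ.comp_add_left x).add (hφ.comp_sub_left x)
  have hpow_eq : ∫ t in Ici r, t ^ (-p) = r ^ (1 - p) / (p - 1) := by
    rw [integral_Ici_eq_integral_Ioi, integral_Ioi_rpow_of_lt (by linarith) hr,
      show -p + 1 = 1 - p by ring, show 1 - p = -(p - 1) by ring, div_neg, neg_div, neg_neg]
  have hshift_le : ∫ t in Ici r, (φ (x + t) + φ (x - t)) ≤ 2 * ∫ y, φ y := by
    refine (setIntegral_le_integral hshift (ae_of_all _ fun t =>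
      add_nonneg (algebraicDecay_nonneg hξ.le _) (algebraicDecay_nonneg hξ.le _))).trans_eq ?_
    rw [integral_add (hφ.comp_add_left x) (hφ.comp_sub_left x), integral_add_left_eq_self,
      integral_sub_left_eq_self, two_mul]
  calc |∫ t in Ici r, secondDiffQuotient φ p x t|
      ≤ ∫ t in Ici r, g t :=
        norm_integral_le_of_norm_le ((hpow.const_mul _).add (hshift.integrableOn.const_mul _))
          (ae_restrict_of_forall_mem measurableSet_Ici hbound)
    _ = 2 * φ x * (r ^ (1 - p) / (p - 1)) +
          r ^ (-p) * ∫ t in Ici r, (φ (x + t) + φ (x - t)) := by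
        rw [integral_add (hpow.const_mul _) (hshift.integrableOn.const_mul _), integral_const_mul,
          integral_const_mul, hpow_eq]
    _ ≤ 2 * (ξ ^ (1 - γ) * r ^ (-1 : ℝ)) * (r ^ (1 - p) / (p - 1)) +
          r ^ (-p) * (2 * ∫ y, φ y) := by
        gcongr
        exact algebraicDecay_le_mul_rpow_neg_one hγ.le hξ hr (half_le_self hx.le)
    _ = (ξ ^ (1 - γ) / s + 2 * ∫ y, φ y) * r ^ (-p) := by
        have : r ^ (-1 : ℝ) * r ^ (1 - p) = r ^ (-p) := by rw [← Real.rpow_add hr]; ring_nf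
        rw [show p - 1 = 2 * s by ring, ← this]
        ring

theorem exists_abs_truncatedFracLaplacian_algebraicDecay_le (hs : 0 < s) (hs1 : s < 1)
    (hγ : 1 < γ) (hξ : 0 < ξ) :
    ∃ K, 0 < K ∧ ∀ x ≠ 0, ∀ ε, 0 < ε → ε < |x| / 2 →
      |truncatedFracLaplacian s ε (algebraicDecay γ ξ) x| ≤ K * |x| ^ (-(1 + 2 * s)) := by
  set p := 1 + 2 * s with hp_def
  have hp : 1 < p := by linarith
  set Knear := γ * (γ + 1) * ξ ^ (1 - γ) / (1 - s)
  set Kfar := ξ ^ (1 - γ) / s + 2 * ∫ y, algebraicDecay γ ξ y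
  have hKnear : 0 < Knear := by
    have : 0 < γ * (γ + 1) := mul_pos (by linarith) (by linarith)
    have : 0 < 1 - s := by linarith
    positivity
  have hKfar : 0 ≤ Kfar := by
    have : 0 ≤ ∫ y, algebraicDecay γ ξ y := integral_nonneg (algebraicDecay_nonneg hξ.le)
    positivity
  refine ⟨2 ^ p * (Knear + Kfar), by positivity, fun x hx ε hε hεx => ?_⟩
  have hx0 : 0 < |x| := abs_pos.mpr hx
  have hM := abs_algebraicDecay_le (γ := γ) (by linarith) hξ
  have hmeas := (continuous_algebraicDecay (γ := γ) hξ).measurable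
  have hint := integrableOn_Ioi_secondDiffQuotient (x := |x|) hmeas hM hp hε
  have heven : Function.Even (algebraicDecay γ ξ) := algebraicDecay_neg
  rw [truncatedFracLaplacian_eq_integral_Ioi hmeas hM hs hε,
    ← integral_congr_ae (ae_of_all _ (secondDiffQuotient_abs heven p x)),
    ← Ioo_union_Ici_eq_Ioi hεx,
    setIntegral_union ((Iio_disjoint_Ici le_rfl).mono_left Ioo_subset_Iio_self) measurableSet_Ici
      (hint.mono_set Ioo_subset_Ioi_self) (hint.mono_set (Ici_subset_Ioi.mpr hεx))]
  calc _ ≤ Knear * (|x| / 2) ^ (-p) + Kfar * (|x| / 2) ^ (-p) :=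
        (abs_add_le _ _).trans (add_le_add
          (abs_setIntegral_Ioo_secondDiffQuotient_le hs1 hγ.le hξ hx0 hε hεx.le)
          (abs_setIntegral_Ici_secondDiffQuotient_le hs hγ hξ hx0))
    _ = 2 ^ p * (Knear + Kfar) * |x| ^ (-p) := by
        rw [Real.div_rpow hx0.le zero_le_two, Real.rpow_neg zero_le_two, div_inv_eq_mul]
        ring

end algebraicDecay

theorem stmt10_general (s γ ξ σ : ℝ) (hs1 : 0 < s) (hs2 : s < 1) (hγ : 1 < γ) (hξ : 0 < ξ)
    (φ : ℝ → ℝ) (hφ : ∀ x : ℝ, φ x = (|x| + ξ) ^ (-γ))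
    (L : ℝ → ℝ)
    (hL : ∀ x : ℝ, Filter.Tendsto
      (fun ε : ℝ => ∫ y in {y : ℝ | ε < |x - y|}, (φ x - φ y) / |x - y| ^ (1 + 2 * s))
      (nhdsWithin 0 (Set.Ioi 0)) (nhds (L x)))
    (x₀ : ℝ) (hx₀ : 1 < |x₀|) :
    ∃ C : ℝ, 0 < C ∧ ∀ x : ℝ, |x₀| ≤ |x| → |σ * L x| ≤ C * |x| ^ (-(1 + 2 * s)) := by
  obtain rfl : φ = algebraicDecay γ ξ := funext hφ
  obtain ⟨K, hK, hbound⟩ := exists_abs_truncatedFracLaplacian_algebraicDecay_le hs1 hs2 hγ hξ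
  refine ⟨(|σ| + 1) * K, by positivity, fun x hx => ?_⟩
  have hx0 : 0 < |x| := by linarith
  have hLx : |L x| ≤ K * |x| ^ (-(1 + 2 * s)) :=
    le_of_tendsto (hL x).abs <| by
      filter_upwards [Ioo_mem_nhdsGT (half_pos hx0)] with ε hε
      exact hbound x (abs_pos.mp hx0) ε hε.1 hε.2
  rw [abs_mul, mul_assoc]
  exact mul_le_mul (by linarith) hLx (abs_nonneg _) (by positivity)

/-- for s ∈ (0,1), γ > 1, ξ > 0 and φ(x) = (|x|+ξ)^{−γ} on ℝ, the
one-dimensional fractional Laplacian (−Δ)^s φ(x) = σ_s P.V. ∫ (φ(x)−φ(y))/|x−y|^{1+2s} dy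
satisfies |(−Δ)^s φ(x)| ≤ C |x|^{−(1+2s)} for all |x| ≥ |x₀| > 1, with C = C(γ,s,ξ). -/
theorem stmt10 (s γ ξ σ : ℝ) (hs1 : 0 < s) (hs2 : s < 1) (hγ : 1 < γ) (hξ : 0 < ξ)
    (hσ : 0 < σ)
    (φ : ℝ → ℝ) (hφ : ∀ x : ℝ, φ x = (|x| + ξ) ^ (-γ))
    (L : ℝ → ℝ)
    (hL : ∀ x : ℝ, Filter.Tendsto
      (fun ε : ℝ => ∫ y in {y : ℝ | ε < |x - y|}, (φ x - φ y) / |x - y| ^ (1 + 2 * s))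
      (nhdsWithin 0 (Set.Ioi 0)) (nhds (L x)))
    (x₀ : ℝ) (hx₀ : 1 < |x₀|) :
    ∃ C : ℝ, 0 < C ∧ ∀ x : ℝ, |x₀| ≤ |x| → |σ * L x| ≤ C * |x| ^ (-(1 + 2 * s)) :=
  stmt10_general s γ ξ σ hs1 hs2 hγ hξ φ hφ L hL x₀ hx₀
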